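/- arXiv:math/0203292 — 5 statements merged into one kernel-verified Lean document; each statement's English description precedes it below -/
import Mathlib

section
/- Let f, g ∈ ℤ[x] be one-variable integer polynomials that are coprime in ℚ[x]. For each prime p, let c_p denote the number of residues x ∈ ℤ/p with f(x) ≡ g(x) ≡ 0 (mod p). Then the density of positive integers a with gcd(f(a), g(a)) = 1 equals ∏_p (1 - c_p/p), and this product converges. -/
/-!
Clearing denominators in a Bézout identity over `ℚ` gives `A f + B g = d` with `A, B ∈ ℤ[x]` and
`0 ≠ d ∈ ℤ`. So a prime dividing both `f(a)` and `g(a)` divides `d`, and `c_p = 0` for `p ∤ d`: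
almost all factors of the product are `1`, and `gcd(f(a), g(a)) = 1` depends only on `a` modulo
`M = ∏_{p ∣ d} p`. By the Chinese remainder theorem exactly `∏_{p ∣ d} (p - c_p)` residues modulo `M`
satisfy it, and a set of naturals that is periodic modulo `M` has density equal to the proportion
of residues modulo `M` that it contains.
-/

open Filter Polynomial Function Finset Topology
open scoped nonZeroDivisors

theorem Polynomial.exists_mul_add_mul_eq_C_of_isCoprime_map {R K : Type*} [CommRing R]
    [CommRing K] [Algebra R K] [IsFractionRing R K] {f g : R[X]}
    (h : IsCoprime (f.map (algebraMap R K)) (g.map (algebraMap R K))) :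
    ∃ d ∈ R⁰, ∃ A B : R[X], A * f + B * g = C d := by
  obtain ⟨u, v, huv⟩ := h
  obtain ⟨b, hbR, hb⟩ := IsLocalization.integerNormalization_spec R⁰ u
  obtain ⟨b', hb'R, hb'⟩ := IsLocalization.integerNormalization_spec R⁰ v
  refine ⟨b * b', mul_mem hbR hb'R, b' • IsLocalization.integerNormalization R⁰ u,
    b • IsLocalization.integerNormalization R⁰ v, ?_⟩
  apply map_injective _ (IsFractionRing.injective R K)
  simp only [Polynomial.map_add, Polynomial.map_mul, Polynomial.map_smul, hb, hb', map_C,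
    algebraMap_smul, smul_smul, smul_mul_assoc]
  rw [mul_comm b', ← smul_add, huv]
  simp [Algebra.smul_def]

theorem Polynomial.map_eq_zero_of_mul_add_mul_eq_C {R S : Type*} [CommSemiring R] [CommSemiring S]
    (φ : R →+* S) {f g A B : R[X]} {d : R} (h : A * f + B * g = C d) {x : S}
    (hf : (f.map φ).eval x = 0) (hg : (g.map φ).eval x = 0) : φ d = 0 := by
  simpa [hf, hg] using congrArg (fun q : R[X] => (q.map φ).eval x) h.symm

theorem Int.isCoprime_iff_forall_prime_not_dvd {x y : ℤ} :
    IsCoprime x y ↔ ∀ p : ℕ, p.Prime → ¬((p : ℤ) ∣ x ∧ (p : ℤ) ∣ y) := by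
  rw [Int.isCoprime_iff_nat_coprime, ← not_iff_not, Nat.Prime.not_coprime_iff_dvd]
  simp [Int.natCast_dvd]

theorem Nat.card_Icc_one_eq_count (q : ℕ → Prop) [DecidablePred q] (B : ℕ) :
    Nat.card {a // 1 ≤ a ∧ a ≤ B ∧ q a} = Nat.count (fun k => q (k + 1)) B := by
  rw [Nat.count_eq_card_filter_range, ← Nat.card_eq_finsetCard]
  refine Nat.card_congr ⟨fun a => ⟨a - 1, ?_⟩, fun k => ⟨k + 1, ?_⟩, ?_, ?_⟩
  · simp only [mem_filter, mem_range, Nat.sub_add_cancel a.2.1]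
    exact ⟨by omega, a.2.2.2⟩
  · have hk := mem_filter.mp k.2
    exact ⟨by omega, by simpa using hk.1, hk.2⟩
  · intro a; ext; simp only; omega
  · intro k; ext; simp

namespace Function.Periodic

variable {q : ℕ → Prop} [DecidablePred q] {M : ℕ}

theorem count_mul_add (hq : Periodic q M) (k r : ℕ) :
    Nat.count q (k * M + r) = k * Nat.count q M + Nat.count q r := by
  induction k with
  | zero => simp
  | succ k ih =>
    rw [add_mul, one_mul, add_right_comm, Nat.count_add']
    simp only [show ∀ j, q (j + M) = q j from hq, ih]
    ring

theorem abs_count_sub_le (hq : Periodic q M) (hM : 0 < M) (n : ℕ) :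
    |(Nat.count q n : ℝ) - n * Nat.count q M / M| ≤ Nat.count q M := by
  obtain ⟨k, r, hr, rfl⟩ : ∃ k r, r < M ∧ n = k * M + r :=
    ⟨n / M, n % M, Nat.mod_lt n hM, (Nat.div_add_mod' n M).symm⟩
  have hcount : Nat.count q r ≤ Nat.count q M := Nat.count_monotone q hr.le
  have hfrac : (r : ℝ) * Nat.count q M / M ≤ Nat.count q M := by
    rw [div_le_iff₀ (by positivity), mul_comm]
    gcongr
  have hsplit : ((k * M + r : ℕ) : ℝ) * Nat.count q M / M =
      k * Nat.count q M + r * Nat.count q M / M := by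
    push_cast
    field_simp
  rw [hq.count_mul_add, hsplit, abs_le]
  push_cast
  have hcount' : (Nat.count q r : ℝ) ≤ Nat.count q M := by exact_mod_cast hcount
  have hfrac₀ : (0 : ℝ) ≤ r * Nat.count q M / M := by positivity
  constructor <;> linarith

theorem tendsto_count_div (hq : Periodic q M) (hM : 0 < M) :
    Tendsto (fun n : ℕ => (Nat.count q n : ℝ) / n) atTop (𝓝 (Nat.count q M / M)) := by
  rw [tendsto_iff_dist_tendsto_zero]
  refine squeeze_zero' (Eventually.of_forall fun _ => dist_nonneg) ?_
    (tendsto_const_div_atTop_nhds_zero_nat (Nat.count q M : ℝ))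
  filter_upwards [eventually_gt_atTop 0] with n hn
  have hn' : (0 : ℝ) < n := by exact_mod_cast hn
  calc dist ((Nat.count q n : ℝ) / n) (Nat.count q M / M)
      = |(Nat.count q n : ℝ) - n * Nat.count q M / M| / n := by
        rw [Real.dist_eq, ← abs_of_pos hn', ← abs_div, abs_of_pos hn']
        congr 1
        field_simp
    _ ≤ Nat.count q M / n := by gcongr; exact hq.abs_count_sub_le hM n

theorem count_comp_add_one (hq : Periodic q M) :
    Nat.count (fun k => q (k + 1)) M = Nat.count q M := by
  have h₁ := Nat.count_add' q M 1
  have h₂ := Nat.count_add q M 1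
  simp only [show ∀ j, q (M + j) = q j from fun j => by rw [add_comm]; exact hq j,
    Nat.count_one] at h₁ h₂
  omega

theorem tendsto_card_div (hq : Periodic q M) (hM : 0 < M) :
    Tendsto (fun B : ℕ => (Nat.card {a // 1 ≤ a ∧ a ≤ B ∧ q a} : ℝ) / B) atTop
      (𝓝 (Nat.count q M / M)) := by
  simp only [Nat.card_Icc_one_eq_count]
  rw [← hq.count_comp_add_one]
  exact (hq.add_const 1).tendsto_count_div hM

end Function.Periodic

theorem ZMod.count_natCast_mem (n : ℕ) [NeZero n] (T : Finset (ZMod n)) :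
    Nat.count (fun a => (a : ZMod n) ∈ T) n = #T := by
  rw [Nat.count_eq_card_filter_range]
  refine card_nbij' (↑) ZMod.val ?_ ?_ ?_ ?_
  · intro a ha; simpa using (mem_filter.mp ha).2
  · intro x hx; simpa [ZMod.val_lt] using hx
  · intro a ha; simpa using ZMod.val_cast_of_lt (mem_range.mp (mem_filter.mp ha).1)
  · intro x _; simp

section ChineseRemainder

variable {ι : Type*} [Fintype ι] {m : ι → ℕ}

theorem ZMod.periodic_forall_natCast_mem (S : ∀ i, Finset (ZMod (m i))) :
    Periodic (fun a : ℕ => ∀ i, (a : ZMod (m i)) ∈ S i) (∏ i, m i) := by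
  intro a
  have hM : ∀ i, ((∏ j, m j : ℕ) : ZMod (m i)) = 0 := fun i =>
    (ZMod.natCast_eq_zero_iff _ _).2 (dvd_prod_of_mem m (mem_univ i))
  simp only [Nat.cast_add, hM, add_zero]

theorem ZMod.count_forall_natCast_mem [∀ i, NeZero (m i)] (hm : Pairwise (Nat.Coprime on m))
    (S : ∀ i, Finset (ZMod (m i))) :
    Nat.count (fun a : ℕ => ∀ i, (a : ZMod (m i)) ∈ S i) (∏ i, m i) = ∏ i, #(S i) := by
  classical
  have : NeZero (∏ i, m i) := ⟨prod_ne_zero_iff.mpr fun i _ => NeZero.ne (m i)⟩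
  let e := ZMod.prodEquivPi m hm
  have he : ∀ a : ℕ, (∀ i, (a : ZMod (m i)) ∈ S i) ↔
      (a : ZMod (∏ i, m i)) ∈ (Fintype.piFinset S).map e.symm.toEquiv.toEmbedding := by
    intro a
    rw [mem_map_equiv, Fintype.mem_piFinset]
    simp [map_natCast]
  simp only [he, ZMod.count_natCast_mem, card_map, Fintype.card_piFinset]

end ChineseRemainder

section CommonRoots

variable (f g : ℤ[X]) (n : ℕ) [NeZero n]

noncomputable def commonRootsMod : Finset (ZMod n) :=
  {x | (f.map (Int.castRingHom (ZMod n))).eval x = 0 ∧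
    (g.map (Int.castRingHom (ZMod n))).eval x = 0}

theorem card_commonRootsMod : #(commonRootsMod f g n) = Nat.card {x : ZMod n //
    (f.map (Int.castRingHom (ZMod n))).eval x = 0 ∧
    (g.map (Int.castRingHom (ZMod n))).eval x = 0} := by
  rw [Nat.card_eq_fintype_card, Fintype.card_subtype]
  rfl

variable {f g n}

theorem intCast_mem_commonRootsMod_iff (a : ℤ) :
    (a : ZMod n) ∈ commonRootsMod f g n ↔ (n : ℤ) ∣ f.eval a ∧ (n : ℤ) ∣ g.eval a := by
  simp only [commonRootsMod, mem_filter, mem_univ, true_and, eval_intCast_map,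
    Int.coe_castRingHom, Int.cast_id, ZMod.intCast_zmod_eq_zero_iff_dvd]

theorem commonRootsMod_eq_empty_of_not_dvd {A B : ℤ[X]} {d : ℤ} (h : A * f + B * g = C d)
    (hn : ¬(n : ℤ) ∣ d) : commonRootsMod f g n = ∅ := by
  refine eq_empty_of_forall_notMem fun x hx => hn ?_
  simp only [commonRootsMod, mem_filter, mem_univ, true_and] at hx
  exact (ZMod.intCast_zmod_eq_zero_iff_dvd d n).mp
    (map_eq_zero_of_mul_add_mul_eq_C (Int.castRingHom (ZMod n)) h hx.1 hx.2)

end CommonRoots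

instance Nat.Primes.neZero (p : Nat.Primes) : NeZero (p : ℕ) := ⟨p.2.ne_zero⟩

theorem isCoprime_eval_iff_forall_notMem_commonRootsMod {f g : ℤ[X]} (a : ℤ) :
    IsCoprime (f.eval a) (g.eval a) ↔ ∀ p : Nat.Primes, (a : ZMod p) ∉ commonRootsMod f g p := by
  simp only [Int.isCoprime_iff_forall_prime_not_dvd, intCast_mem_commonRootsMod_iff]
  exact ⟨fun h p => h p p.2, fun h p hp => h ⟨p, hp⟩⟩

theorem ZMod.one_sub_card_div_eq_card_compl_div (n : ℕ) [NeZero n] (T : Finset (ZMod n)) :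
    1 - (#T : ℝ) / n = #Tᶜ / n := by
  have hn : (0 : ℝ) < n := by exact_mod_cast Nat.pos_of_neZero n
  rw [card_compl, ZMod.card, Nat.cast_sub ((card_le_univ T).trans (ZMod.card n).le)]
  field_simp

/-- If `f, g ∈ ℤ[x]` are coprime in `ℚ[x]`, and for each prime `p`, `c p` is the number of
residues `x` mod `p` with `f(x) ≡ g(x) ≡ 0 (mod p)`, then the density of positive integers
`a` with `gcd(f(a), g(a)) = 1` equals `∏_p (1 - c_p/p)`, and this product converges. -/
theorem density_coprime_values_one_var (f g : Polynomial ℤ)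
    (hfg : IsCoprime (f.map (Int.castRingHom ℚ)) (g.map (Int.castRingHom ℚ)))
    (c : Nat.Primes → ℕ)
    (hc : ∀ p : Nat.Primes, c p = Nat.card {x : ZMod p //
      (f.map (Int.castRingHom (ZMod p))).eval x = 0 ∧
      (g.map (Int.castRingHom (ZMod p))).eval x = 0}) :
    Multipliable (fun p : Nat.Primes => (1 - (c p : ℝ) / ((p : ℕ) : ℝ))) ∧
    Tendsto (fun B : ℕ =>
        (Nat.card {a : ℕ // 1 ≤ a ∧ a ≤ B ∧ IsCoprime (f.eval (a : ℤ)) (g.eval (a : ℤ))} : ℝ)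
          / B)
      atTop (nhds (∏' p : Nat.Primes, (1 - (c p : ℝ) / ((p : ℕ) : ℝ)))) := by
  obtain ⟨d, hd, A, B, hAB⟩ := exists_mul_add_mul_eq_C_of_isCoprime_map hfg
  let P : Finset Nat.Primes := d.natAbs.primeFactors.subtype Nat.Prime
  have hempty : ∀ p ∉ P, commonRootsMod f g p = ∅ := fun p hp =>
    commonRootsMod_eq_empty_of_not_dvd hAB fun hpd => hp <| mem_subtype.mpr <|
      Nat.mem_primeFactors.mpr
        ⟨p.2, Int.natCast_dvd.mp hpd, by simpa using nonZeroDivisors.ne_zero hd⟩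
  have hcard : ∀ p, c p = #(commonRootsMod f g p) := fun p =>
    (hc p).trans (card_commonRootsMod f g p).symm
  have hone : ∀ p ∉ P, 1 - (c p : ℝ) / p = 1 := fun p hp => by simp [hcard, hempty p hp]
  have hgood : ∀ a : ℕ, IsCoprime (f.eval (a : ℤ)) (g.eval (a : ℤ)) ↔
      ∀ p : P, (a : ZMod (p : ℕ)) ∈ (commonRootsMod f g p)ᶜ := fun a => by
    rw [isCoprime_eval_iff_forall_notMem_commonRootsMod]
    simp only [Int.cast_natCast, mem_compl, Subtype.forall]
    refine forall_congr' fun p => ⟨fun h _ => h, fun h => ?_⟩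
    by_cases hp : p ∈ P
    exacts [h hp, by simp [hempty p hp]]
  have hcoprime : Pairwise (Nat.Coprime on fun p : P => ((p : Nat.Primes) : ℕ)) :=
    fun p q hpq => (Nat.coprime_primes p.1.2 q.1.2).mpr fun h => hpq (Subtype.ext (Subtype.ext h))
  have key := (ZMod.periodic_forall_natCast_mem fun p : P => (commonRootsMod f g p)ᶜ)
    |>.tendsto_card_div (prod_pos fun p _ => p.1.2.pos)
  rw [ZMod.count_forall_natCast_mem hcoprime] at key
  refine ⟨multipliable_of_ne_finset_one hone, ?_⟩
  simp only [hgood]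
  convert key using 2
  rw [tprod_eq_prod hone, ← prod_coe_sort, Nat.cast_prod, Nat.cast_prod, ← prod_div_distrib]
  simp only [hcard, ZMod.one_sub_card_div_eq_card_compl_div]
end

section
/- Let K = F_q(t), regarded as a subfield of F_q(t^{1/p}), and let u = y₀ + t^{1/p}y₁ + ⋯ + t^{(p-1)/p}y_{p-1} in F_q(t^{1/p})[y₀,…,y_{p-1}]. Then F_q(t^{1/p})[u] ∩ F_q(t)[y₀,…,y_{p-1}] = F_q(t)[u^p]. -/
open MvPolynomial

/-- `u = y₀ + s·y₁ + ⋯ + s^{p-1}·y_{p-1}` in `F_q(s)[y₀,…,y_{p-1}]`, where `s = t^{1/p}`. -/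
noncomputable def uElt (p : ℕ) (Fq : Type*) [Field Fq] :
    MvPolynomial (Fin p) (RatFunc Fq) :=
  ∑ j : Fin p, C ((RatFunc.X : RatFunc Fq) ^ (j : ℕ)) * X j

/-- Subring of multivariate polynomials with all coefficients in a subring. -/
def mvCoeffsIn (σ : Type*) {R : Type*} [CommRing R] (K : Subring R) :
    Subring (MvPolynomial σ R) where
  carrier := {g | ∀ m, MvPolynomial.coeff m g ∈ K}
  zero_mem' := fun m => by rw [MvPolynomial.coeff_zero]; exact zero_mem K
  one_mem' := fun m => by
    classical
    rw [MvPolynomial.coeff_one]; split_ifs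
    exacts [one_mem K, zero_mem K]
  add_mem' := fun ha hb m => by
    rw [MvPolynomial.coeff_add]; exact add_mem (ha m) (hb m)
  neg_mem' := fun ha m => by
    rw [MvPolynomial.coeff_neg]; exact neg_mem (ha m)
  mul_mem' := fun {a b} ha hb m => by
    classical
    rw [MvPolynomial.coeff_mul]
    exact Subring.sum_mem _ fun x _ => mul_mem (ha _) (hb _)

/-- Subring of polynomials with all coefficients in a subring. -/
def pCoeffsIn {R : Type*} [CommRing R] (K : Subring R) : Subring (Polynomial R) where
  carrier := {g | ∀ n, g.coeff n ∈ K}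
  zero_mem' := fun n => by rw [Polynomial.coeff_zero]; exact zero_mem K
  one_mem' := fun n => by
    rw [Polynomial.coeff_one]; split_ifs
    exacts [one_mem K, zero_mem K]
  add_mem' := fun ha hb n => by
    rw [Polynomial.coeff_add]; exact add_mem (ha n) (hb n)
  neg_mem' := fun ha n => by
    rw [Polynomial.coeff_neg]; exact neg_mem (ha n)
  mul_mem' := fun {a b} ha hb n => by
    rw [Polynomial.coeff_mul]
    exact Subring.sum_mem _ fun x _ => mul_mem (ha _) (hb _)

lemma C_mem_mvCoeffsIn {σ R : Type*} [CommRing R] {K : Subring R} {a : R} (ha : a ∈ K) :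
    (MvPolynomial.C a : MvPolynomial σ R) ∈ mvCoeffsIn σ K := fun m => by
  classical
  rw [MvPolynomial.coeff_C]; split_ifs
  exacts [ha, zero_mem K]

lemma X_mem_mvCoeffsIn {σ R : Type*} [CommRing R] {K : Subring R} (j : σ) :
    (MvPolynomial.X j : MvPolynomial σ R) ∈ mvCoeffsIn σ K := fun m => by
  classical
  rw [MvPolynomial.coeff_X']; split_ifs
  exacts [one_mem K, zero_mem K]

lemma C_mem_pCoeffsIn {R : Type*} [CommRing R] {K : Subring R} {a : R} (ha : a ∈ K) :
    (Polynomial.C a : Polynomial R) ∈ pCoeffsIn K := fun n => by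
  rw [Polynomial.coeff_C]; split_ifs
  exacts [ha, zero_mem K]

lemma X_mem_pCoeffsIn {R : Type*} [CommRing R] {K : Subring R} :
    (Polynomial.X : Polynomial R) ∈ pCoeffsIn K := fun n => by
  rw [Polynomial.coeff_X]; split_ifs
  exacts [one_mem K, zero_mem K]

/-- evaluating a polynomial with coefficients in `K` at values with coefficients
in `K` gives a polynomial with coefficients in `K`. -/
lemma aeval_mem_pCoeffsIn {σ R : Type*} [CommRing R] {K : Subring R}
    (v : σ → Polynomial R) (hv : ∀ j, v j ∈ pCoeffsIn K)
    {g : MvPolynomial σ R} (hg : g ∈ mvCoeffsIn σ K) :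
    MvPolynomial.aeval v g ∈ pCoeffsIn K := by
  rw [g.as_sum, map_sum]
  refine Subring.sum_mem _ fun m _ => ?_
  rw [MvPolynomial.aeval_monomial]
  refine mul_mem ?_ ?_
  · rw [Polynomial.algebraMap_eq]
    exact C_mem_pCoeffsIn (hg m)
  · exact Subring.prod_mem _ fun j _ => pow_mem (hv j) _

lemma coeff_aeval_C_mul_X {R : Type*} [CommRing R] (a : R) (r : Polynomial R) (n : ℕ) :
    (Polynomial.aeval (Polynomial.C a * Polynomial.X) r).coeff n = r.coeff n * a ^ n := by
  induction r using Polynomial.induction_on' with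
  | add f g hf hg => simp [hf, hg, add_mul]
  | monomial m c =>
    rw [Polynomial.aeval_monomial, mul_pow, ← Polynomial.C_pow, Polynomial.algebraMap_eq,
      ← mul_assoc, ← Polynomial.C_mul, Polynomial.coeff_C_mul, Polynomial.coeff_X_pow,
      Polynomial.coeff_monomial]
    split_ifs with h h' h'
    · subst h; ring
    · simp_all
    · simp_all
    · simp

/-- `X` is not in `F_q(X^p)`. -/
lemma X_notMem_adjoin_X_pow {Fq : Type*} [Field Fq] {p : ℕ} (hp : 1 < p) :
    (RatFunc.X : RatFunc Fq) ∉ IntermediateField.adjoin Fq {(RatFunc.X : RatFunc Fq) ^ p} := by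
  intro h
  rw [IntermediateField.mem_adjoin_simple_iff] at h
  obtain ⟨f, g, hfg⟩ := h
  have key : ∀ h : Polynomial Fq,
      Polynomial.aeval ((RatFunc.X : RatFunc Fq) ^ p) h
        = algebraMap (Polynomial Fq) (RatFunc Fq) (Polynomial.expand Fq p h) := by
    intro h
    rw [← RatFunc.algebraMap_X, ← map_pow, Polynomial.aeval_algebraMap_apply]
    congr 1
  by_cases hg : Polynomial.aeval ((RatFunc.X : RatFunc Fq) ^ p) g = 0
  · rw [hg, div_zero] at hfg
    exact RatFunc.X_ne_zero hfg
  · have heq : (RatFunc.X : RatFunc Fq) * Polynomial.aeval ((RatFunc.X : RatFunc Fq) ^ p) g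
        = Polynomial.aeval ((RatFunc.X : RatFunc Fq) ^ p) f := by
      have := div_mul_cancel₀ (Polynomial.aeval ((RatFunc.X : RatFunc Fq) ^ p) f) hg
      rw [← hfg] at this
      exact this
    rw [key, key, ← RatFunc.algebraMap_X, ← map_mul] at heq
    have hinj := IsFractionRing.injective (Polynomial Fq) (RatFunc Fq)
    have heq2 : Polynomial.X * Polynomial.expand Fq p g = Polynomial.expand Fq p f :=
      hinj heq
    have hg0 : Polynomial.expand Fq p g ≠ 0 := by
      intro h0
      apply hg
      rw [key, h0, map_zero]
    have hf0 : Polynomial.expand Fq p f ≠ 0 := by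
      rw [← heq2]
      exact mul_ne_zero Polynomial.X_ne_zero hg0
    have hfne : f ≠ 0 := fun h0 => hf0 (by rw [h0, map_zero])
    have hd := congrArg Polynomial.natDegree heq2
    rw [Polynomial.natDegree_mul Polynomial.X_ne_zero hg0, Polynomial.natDegree_X,
      Polynomial.natDegree_expand, Polynomial.natDegree_expand] at hd
    -- 1 + a * p = b * p, contradiction mod p
    have h1 : (1 + g.natDegree * p) % p = (f.natDegree * p) % p := by rw [hd]
    rw [Nat.add_mul_mod_self_right, Nat.mul_mod_left, Nat.mod_eq_of_lt hp] at h1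
    exact one_ne_zero h1

/-- evaluating `uElt` at `X_j ↦ C (w j) * X`. -/
lemma aeval_uElt_wX {Fq : Type*} [Field Fq] (p : ℕ) (w : Fin p → RatFunc Fq) :
    MvPolynomial.aeval (fun j => Polynomial.C (w j) * Polynomial.X) (uElt p Fq)
      = Polynomial.C (∑ j : Fin p, (RatFunc.X : RatFunc Fq) ^ (j : ℕ) * w j) * Polynomial.X := by
  rw [uElt, map_sum, map_sum, Finset.sum_mul]
  refine Finset.sum_congr rfl fun j _ => ?_
  rw [map_mul, MvPolynomial.aeval_C, MvPolynomial.aeval_X, Polynomial.algebraMap_eq,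
    Polynomial.C_mul, mul_assoc]

lemma sum_X_pow_single {Fq : Type*} [Field Fq] (p : ℕ) (k : Fin p) :
    ∑ j : Fin p, (RatFunc.X : RatFunc Fq) ^ (j : ℕ) * (Pi.single k (1 : RatFunc Fq) : Fin p → RatFunc Fq) j
      = RatFunc.X ^ (k : ℕ) := by
  rw [Finset.sum_eq_single k]
  · rw [Pi.single_eq_same, mul_one]
  · intro j _ hj
    rw [Pi.single_eq_of_ne hj, mul_zero]
  · intro hk
    exact absurd (Finset.mem_univ k) hk

/-- With `L = F_q(t^{1/p})` (modelled as `F_q(s)` with `t := s^p`) and `K = F_q(t) ⊆ L`,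
and `u = y₀ + t^{1/p}y₁ + ⋯ + t^{(p-1)/p}y_{p-1}`, we have
`L[u] ∩ K[y₀,…,y_{p-1}] = K[u^p]` inside `L[y₀,…,y_{p-1}]`. -/
theorem adjoin_u_inter_K_poly (p : ℕ) [Fact p.Prime]
    (Fq : Type*) [Field Fq] [Fintype Fq] [CharP Fq p] :
    {g : MvPolynomial (Fin p) (RatFunc Fq) |
        g ∈ Algebra.adjoin (RatFunc Fq) {uElt p Fq} ∧
        ∀ m, coeff m g ∈ IntermediateField.adjoin Fq {(RatFunc.X : RatFunc Fq) ^ p}}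
      = {g : MvPolynomial (Fin p) (RatFunc Fq) |
          ∃ q : Polynomial (RatFunc Fq),
            (∀ i, q.coeff i ∈ IntermediateField.adjoin Fq {(RatFunc.X : RatFunc Fq) ^ p}) ∧
            Polynomial.aeval (uElt p Fq ^ p) q = g} := by
  classical
  have hp : p.Prime := Fact.out
  have hp1 : 1 < p := hp.one_lt
  haveI : CharP (RatFunc Fq) p :=
    charP_of_injective_algebraMap (algebraMap Fq (RatFunc Fq)).injective p
  set K := IntermediateField.adjoin Fq {(RatFunc.X : RatFunc Fq) ^ p} with hKdef
  set KS : Subring (RatFunc Fq) := K.toSubfield.toSubring with hKSdef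
  have hmemKS : ∀ x : RatFunc Fq, x ∈ KS ↔ x ∈ K := fun x => Iff.rfl
  have hsp : (RatFunc.X : RatFunc Fq) ^ p ∈ K := IntermediateField.subset_adjoin Fq _ rfl
  have hup : (uElt p Fq) ^ p ∈ mvCoeffsIn (Fin p) KS := by
    rw [uElt, sum_pow_char]
    refine Subring.sum_mem _ fun j _ => ?_
    rw [mul_pow, ← map_pow, ← pow_mul, mul_comm (j : ℕ) p, pow_mul]
    exact mul_mem (C_mem_mvCoeffsIn (pow_mem hsp _)) (pow_mem (X_mem_mvCoeffsIn j) _)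
  ext g
  simp only [Set.mem_setOf_eq]
  constructor
  · rintro ⟨hadj, hcoeff⟩
    rw [Algebra.adjoin_singleton_eq_range_aeval, AlgHom.mem_range] at hadj
    obtain ⟨r, rfl⟩ := hadj
    have hgS : Polynomial.aeval (uElt p Fq) r ∈ mvCoeffsIn (Fin p) KS := fun m => hcoeff m
    have main : ∀ a : RatFunc Fq, ∀ w : Fin p → RatFunc Fq, (∀ j, w j ∈ K) →
        (∑ j : Fin p, (RatFunc.X : RatFunc Fq) ^ (j : ℕ) * w j) = a →
        ∀ n, r.coeff n * a ^ n ∈ K := by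
      intro a w hw ha n
      have hv : ∀ j, (Polynomial.C (w j) * Polynomial.X : Polynomial (RatFunc Fq))
          ∈ pCoeffsIn KS :=
        fun j => mul_mem (C_mem_pCoeffsIn (hw j)) X_mem_pCoeffsIn
      have hmem := aeval_mem_pCoeffsIn (fun j => Polynomial.C (w j) * Polynomial.X) hv hgS
      rw [← Polynomial.aeval_algHom_apply, aeval_uElt_wX, ha] at hmem
      have h2 := hmem n
      rwa [coeff_aeval_C_mul_X] at h2
    have j0 : Fin p := ⟨0, hp.pos⟩
    have j1 : Fin p := ⟨1, hp1⟩
    have hA : ∀ n, r.coeff n ∈ K := by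
      intro n
      have h := main 1 (Pi.single (⟨0, hp.pos⟩ : Fin p) 1)
        (fun j => by rw [Pi.single_apply]; split_ifs; exacts [one_mem K, zero_mem K])
        (by rw [sum_X_pow_single]; norm_num) n
      rwa [one_pow, mul_one] at h
    have hXK : (RatFunc.X : RatFunc Fq) ∉ K := X_notMem_adjoin_X_pow hp1
    have hB : ∀ n, ¬ p ∣ n → r.coeff n = 0 := by
      intro n hn
      by_contra hc
      have h1s : ((1 : RatFunc Fq) + RatFunc.X) ^ n ∈ K := by
        have h := main (1 + RatFunc.X)
          ((Pi.single (⟨0, hp.pos⟩ : Fin p) 1) + (Pi.single (⟨1, hp1⟩ : Fin p) 1))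
          (fun j => by
            rw [Pi.add_apply, Pi.single_apply, Pi.single_apply]
            split_ifs <;>
              first
                | exact add_mem (one_mem K) (one_mem K)
                | exact add_mem (one_mem K) (zero_mem K)
                | exact add_mem (zero_mem K) (one_mem K)
                | exact add_mem (zero_mem K) (zero_mem K))
          (by
            simp only [Pi.add_apply, mul_add, Finset.sum_add_distrib, sum_X_pow_single]
            norm_num) n
        have hcalc : ((1 : RatFunc Fq) + RatFunc.X) ^ n
            = (r.coeff n)⁻¹ * (r.coeff n * (1 + RatFunc.X) ^ n) := by
          rw [← mul_assoc, inv_mul_cancel₀ hc, one_mul]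
        rw [hcalc]
        exact mul_mem (inv_mem (hA n)) h
      have hps : ((1 : RatFunc Fq) + RatFunc.X) ^ p ∈ K := by
        rw [add_pow_char, one_pow]
        exact add_mem (one_mem K) hsp
      by_cases h0 : (1 : RatFunc Fq) + RatFunc.X = 0
      · refine hXK ?_
        have : (RatFunc.X : RatFunc Fq) = -1 := by linear_combination h0
        rw [this]
        exact neg_mem (one_mem K)
      · have hcop : Nat.gcd n p = 1 := (Nat.coprime_comm.mp ((hp.coprime_iff_not_dvd).mpr hn))
        have hb := Nat.gcd_eq_gcd_ab n p
        rw [hcop] at hb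
        have hxK : (1 : RatFunc Fq) + RatFunc.X ∈ K := by
          have hzpow : ((1 : RatFunc Fq) + RatFunc.X)
              = (((1 : RatFunc Fq) + RatFunc.X) ^ n) ^ (Nat.gcdA n p)
                * (((1 : RatFunc Fq) + RatFunc.X) ^ p) ^ (Nat.gcdB n p) := by
            rw [← zpow_natCast ((1 : RatFunc Fq) + RatFunc.X) n,
              ← zpow_natCast ((1 : RatFunc Fq) + RatFunc.X) p,
              ← zpow_mul, ← zpow_mul, ← zpow_add₀ h0]
            rw [show ((n : ℤ) * Nat.gcdA n p + (p : ℤ) * Nat.gcdB n p) = 1 by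
              rw [← hb]; norm_num]
            exact (zpow_one _).symm
          rw [hzpow]
          exact mul_mem (K.toSubfield.zpow_mem h1s _) (K.toSubfield.zpow_mem hps _)
        refine hXK ?_
        have := sub_mem hxK (one_mem K)
        simpa using this
    refine ⟨Polynomial.contract p r, fun i => ?_, ?_⟩
    · rw [Polynomial.coeff_contract hp.ne_zero]
      exact hA _
    · rw [← Polynomial.expand_aeval]
      congr 1
      ext n
      rw [Polynomial.coeff_expand hp.pos, Polynomial.coeff_contract hp.ne_zero]
      split_ifs with h
      · rw [Nat.div_mul_cancel h]
      · exact (hB n h).symm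
  · rintro ⟨q, hq, rfl⟩
    constructor
    · rw [Algebra.adjoin_singleton_eq_range_aeval, AlgHom.mem_range]
      exact ⟨Polynomial.expand _ p q, by rw [Polynomial.expand_aeval]⟩
    · intro m
      refine (?_ : Polynomial.aeval (uElt p Fq ^ p) q ∈ mvCoeffsIn (Fin p) KS) m
      rw [Polynomial.aeval_eq_sum_range]
      refine Subring.sum_mem _ fun i _ => ?_
      rw [MvPolynomial.smul_eq_C_mul]
      exact mul_mem (C_mem_mvCoeffsIn (hq i)) (pow_mem hup i)
end

section
/- Let K = F_q(t) with q a power of the prime p. Suppose f ∈ K[x₁^p, …, xₙ^p] (i.e., f is a polynomial in the p-th powers of the variables) is squarefree as an element of K[x₁,…,xₙ]. Then f and ∂f/∂t are relatively prime in K[x₁,…,xₙ]. -/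
/-!
Let `q` be a prime factor of both `f` and `∂f/∂t`. Since `f` is squarefree, `f = q h` with
`q ∤ h`, so for any derivation `d` with `q ∣ d f` we get `q ∣ d q`. This applies to `∂/∂t`
(coefficientwise) and to every `∂/∂xᵢ`, which kills `f` because its exponents are divisible
by `p`. Neither derivation raises the total degree and `∂/∂xᵢ` lowers it, so after normalising
one coefficient of `q` to `1` both derivatives of `q` vanish. Hence all exponents of `q` are
divisible by `p`, and all its coefficients lie in the kernel of `∂/∂t` on `𝔽_q(t)`, which
consists of `p`-th powers. So `q` is a `p`-th power, contradicting its irreducibility.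
-/

open MvPolynomial

theorem Derivation.dvd_apply_self_of_prime_dvd_squarefree {R A : Type*} [CommSemiring R]
    [CommRing A] [Algebra R A] (d : Derivation R A A) {q f : A} (hq : Prime q)
    (hf : Squarefree f) (hqf : q ∣ f) (hqdf : q ∣ d f) : q ∣ d q := by
  obtain ⟨h, rfl⟩ := hqf
  have hqh : ¬ q ∣ h := fun ⟨k, hk⟩ => hq.not_isUnit (hf q ⟨k, by rw [hk, mul_assoc]⟩)
  rw [leibniz, smul_eq_mul, smul_eq_mul, dvd_add_right (dvd_mul_right q _)] at hqdf
  exact (hq.dvd_or_dvd hqdf).resolve_left hqh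

namespace Derivation

variable {R A σ : Type*} [CommSemiring R] [CommRing A] [Algebra R A]

lemma coeff_sum_monomial_apply_coeff (d : Derivation R A A) (f : MvPolynomial σ A)
    (m : σ →₀ ℕ) :
    coeff m (∑ m' ∈ f.support, monomial m' (d (coeff m' f))) = d (coeff m f) := by
  classical
  simp only [coeff_sum, coeff_monomial, Finset.sum_ite_eq', mem_support_iff, ne_eq, ite_not]
  split_ifs with h <;> simp [h]

noncomputable def mvMapCoeffs (d : Derivation R A A) :
    Derivation R (MvPolynomial σ A) (MvPolynomial σ A) where
  toFun f := ∑ m ∈ f.support, monomial m (d (coeff m f))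
  map_add' f g := by
    ext m
    rw [coeff_add, coeff_sum_monomial_apply_coeff, coeff_sum_monomial_apply_coeff,
      coeff_sum_monomial_apply_coeff, coeff_add, map_add]
  map_smul' r f := by
    ext m
    rw [coeff_smul, coeff_sum_monomial_apply_coeff, coeff_sum_monomial_apply_coeff, coeff_smul,
      map_smul, RingHom.id_apply]
  map_one_eq_zero' := by
    classical
    ext m
    rw [LinearMap.coe_mk, AddHom.coe_mk, coeff_sum_monomial_apply_coeff, coeff_one, apply_ite d,
      map_one_eq_zero, map_zero, ite_self, coeff_zero]
  leibniz' f g := by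
    classical
    ext m
    rw [LinearMap.coe_mk, AddHom.coe_mk, coeff_sum_monomial_apply_coeff, coeff_add, smul_eq_mul,
      smul_eq_mul, mul_comm g, coeff_mul, coeff_mul, coeff_mul, map_sum, ← Finset.sum_add_distrib]
    refine Finset.sum_congr rfl fun x _ => ?_
    rw [coeff_sum_monomial_apply_coeff, coeff_sum_monomial_apply_coeff, leibniz, smul_eq_mul,
      smul_eq_mul]
    ring

@[simp]
lemma coeff_mvMapCoeffs (d : Derivation R A A) (f : MvPolynomial σ A) (m : σ →₀ ℕ) :
    coeff m (d.mvMapCoeffs f) = d (coeff m f) :=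
  coeff_sum_monomial_apply_coeff d f m

theorem mvMapCoeffs_eq_zero_of_dvd [IsDomain A] (d : Derivation R A A) {q : MvPolynomial σ A}
    {m : σ →₀ ℕ} (hm : coeff m q = 1) (h : q ∣ d.mvMapCoeffs q) : d.mvMapCoeffs q = 0 := by
  obtain ⟨u, hu⟩ := h
  have hq : q ≠ 0 := fun h0 => by simp [h0] at hm
  by_contra hdq
  have hu0 : u ≠ 0 := by rintro rfl; exact hdq (by rw [hu, mul_zero])
  have hdeg : (d.mvMapCoeffs q).totalDegree ≤ q.totalDegree :=
    totalDegree_le_of_support_subset fun m' hm' => by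
      rw [mem_support_iff, coeff_mvMapCoeffs] at hm'
      rw [mem_support_iff]
      exact fun h0 => hm' (by rw [h0, map_zero])
  rw [hu, totalDegree_mul_of_isDomain hq hu0] at hdeg
  have hu_const : u = C (coeff 0 u) := totalDegree_eq_zero_iff_eq_C.mp (by omega)
  -- comparing coefficients at `m`: `d 1 = 1 * coeff 0 u`
  have hc : coeff 0 u = 0 := by
    have := congrArg (coeff m) hu
    rwa [coeff_mvMapCoeffs, hm, map_one_eq_zero, hu_const, mul_comm, coeff_C_mul, hm, mul_one,
      eq_comm] at this
  exact hu0 (by rw [hu_const, hc, C_0])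

end Derivation

namespace MvPolynomial

variable {σ R : Type*}

section CommRing

variable [CommRing R]

theorem totalDegree_pderiv_lt {f : MvPolynomial σ R} {i : σ} (h : pderiv i f ≠ 0) :
    (pderiv i f).totalDegree < f.totalDegree := by
  have hlt : ∀ m ∈ (pderiv i f).support, (m.sum fun _ e => e) < f.totalDegree := by
    intro m hm
    rw [mem_support_iff, coeff_pderiv] at hm
    have := le_totalDegree (mem_support_iff.mpr (left_ne_zero_of_mul hm))
    rw [Finsupp.sum_add_index' (fun _ => rfl) (fun _ _ _ => rfl), Finsupp.sum_single_index rfl]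
      at this
    omega
  obtain ⟨m, hm⟩ := support_nonempty.mpr h
  exact (Finset.sup_lt_iff ((Nat.zero_le _).trans_lt (hlt m hm))).mpr hlt

theorem pderiv_eq_zero_iff_dvd (p : ℕ) [CharP R p] [NoZeroDivisors R] {f : MvPolynomial σ R}
    {i : σ} : pderiv i f = 0 ↔ ∀ m ∈ f.support, p ∣ m i := by
  classical
  have hcast (m : σ →₀ ℕ) :
      ((m i + 1 : ℕ) : R) = 0 ↔ p ∣ (m + Finsupp.single i 1 : σ →₀ ℕ) i := by
    rw [CharP.cast_eq_zero_iff R p, Finsupp.add_apply, Finsupp.single_eq_same]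
  simp only [MvPolynomial.ext_iff, coeff_pderiv, coeff_zero, mul_eq_zero, mem_support_iff]
  constructor
  · intro h m hm
    obtain hmi | hmi := Nat.eq_zero_or_pos (m i)
    · simp [hmi]
    obtain ⟨m', rfl⟩ : ∃ m', m = m' + Finsupp.single i 1 :=
      ⟨m - Finsupp.single i 1, (tsub_add_cancel_of_le (Finsupp.single_le_iff.mpr hmi)).symm⟩
    exact (hcast m').mp (by exact_mod_cast (h m').resolve_left hm)
  · intro h m
    by_cases hm : coeff (m + Finsupp.single i 1) f = 0
    · exact .inl hm
    · exact .inr (by exact_mod_cast (hcast m).mpr (h _ hm))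

theorem exists_pow_eq_of_dvd_of_coeff (p : ℕ) [Fact p.Prime] [CharP R p]
    {f : MvPolynomial σ R} (hexp : ∀ m ∈ f.support, ∀ i, p ∣ m i)
    (hcoeff : ∀ m ∈ f.support, ∃ s, s ^ p = coeff m f) : ∃ g, g ^ p = f := by
  classical
  choose! s hs using hcoeff
  let divp : (σ →₀ ℕ) → σ →₀ ℕ := Finsupp.mapRange (· / p) (Nat.zero_div p)
  refine ⟨∑ m ∈ f.support, monomial (divp m) (s m), ?_⟩
  rw [sum_pow_char]
  conv_rhs => rw [f.as_sum]
  refine Finset.sum_congr rfl fun m hm => ?_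
  have hm_div : p • divp m = m :=
    Finsupp.ext fun i => Nat.mul_div_cancel' (hexp m hm i)
  rw [monomial_pow, hs m hm, hm_div]

end CommRing

theorem exists_associated_coeff_eq_one {K : Type*} [Field K]
    {q : MvPolynomial σ K} (hq : q ≠ 0) : ∃ q', Associated q q' ∧ ∃ m, coeff m q' = 1 := by
  obtain ⟨m, hm⟩ := support_nonempty.mpr hq
  refine ⟨C (coeff m q)⁻¹ * q, (associated_unit_mul_left _ _ ?_).symm, m, ?_⟩
  · exact (isUnit_iff_ne_zero.mpr (inv_ne_zero (mem_support_iff.mp hm))).map C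
  · rw [coeff_C_mul, inv_mul_cancel₀ (mem_support_iff.mp hm)]

variable [CommRing R] [IsDomain R]

theorem pderiv_eq_zero_of_dvd {q : MvPolynomial σ R} {i : σ} (h : q ∣ pderiv i q) :
    pderiv i q = 0 :=
  by_contra fun hq => (totalDegree_le_of_dvd_of_isDomain h hq).not_gt (totalDegree_pderiv_lt hq)

end MvPolynomial

theorem Polynomial.exists_pow_eq_of_derivative_eq_zero {F : Type*} [CommRing F] [IsDomain F]
    (p : ℕ) [Fact p.Prime] [CharP F p] [PerfectRing F p] {w : Polynomial F}
    (hw : derivative w = 0) : ∃ z, z ^ p = w :=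
  ⟨_, (polynomial_expand_eq F p _).symm.trans
    (expand_contract p hw (Fact.out : p.Prime).ne_zero)⟩

namespace RatFunc

variable {F : Type*} [Field F]

theorem derivation_algebraMap (D : Derivation F (RatFunc F) (RatFunc F)) (hD : D X = 1)
    (u : Polynomial F) :
    D (algebraMap (Polynomial F) (RatFunc F) u) =
      algebraMap (Polynomial F) (RatFunc F) (Polynomial.derivative u) := by
  have hext : D.compAlgebraMap (Polynomial F) = Polynomial.mkDerivation F 1 :=
    Polynomial.derivation_ext <| by
      rw [Polynomial.mkDerivation_X, Derivation.compAlgebraMap_apply, algebraMap_X, hD]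
  rw [← Derivation.compAlgebraMap_apply, hext, Polynomial.mkDerivation_apply, Algebra.smul_def,
    mul_one]

theorem exists_pow_eq_of_derivation_eq_zero (p : ℕ) [Fact p.Prime] [CharP F p]
    [PerfectRing F p] (D : Derivation F (RatFunc F) (RatFunc F)) (hD : D X = 1)
    {r : RatFunc F} (hr : D r = 0) : ∃ s, s ^ p = r := by
  let ι := algebraMap (Polynomial F) (RatFunc F)
  have hr_mul : r * ι r.denom = ι r.num := by
    rw [eq_comm, ← div_eq_iff (algebraMap_ne_zero r.denom_ne_zero), num_div_denom]
  -- differentiating `r * denom = num` with `D r = 0`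
  have hwronskian :
      Polynomial.derivative r.num * r.denom = r.num * Polynomial.derivative r.denom := by
    apply algebraMap_injective F
    have := congrArg D hr_mul
    rw [Derivation.leibniz, hr, smul_zero, add_zero, smul_eq_mul, derivation_algebraMap D hD,
      derivation_algebraMap D hD] at this
    rw [map_mul, map_mul, ← this, ← hr_mul]
    ring
  have hdenom : Polynomial.derivative r.denom = 0 :=
    Polynomial.dvd_derivative_iff.mp <| r.isCoprime_num_denom.symm.dvd_of_dvd_mul_left
      ⟨_, hwronskian.symm.trans (mul_comm _ _)⟩
  have hnum : Polynomial.derivative r.num = 0 := by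
    rw [hdenom, mul_zero, mul_eq_zero] at hwronskian
    exact hwronskian.resolve_right r.denom_ne_zero
  obtain ⟨a, ha⟩ := Polynomial.exists_pow_eq_of_derivative_eq_zero p hnum
  obtain ⟨b, hb⟩ := Polynomial.exists_pow_eq_of_derivative_eq_zero p hdenom
  exact ⟨ι a / ι b, by rw [div_pow, ← map_pow, ← map_pow, ha, hb, num_div_denom]⟩

end RatFunc

/-- Let `K = F_q(t)` with `q` a power of the prime `p`, and let `∂/∂t` be the `F_q`-linear
derivation of `K` with `∂t/∂t = 1`. If `f ∈ K[x₁^p,…,xₙ^p]` is squarefree as an element of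
`K[x₁,…,xₙ]`, then `f` and `∂f/∂t` (applied coefficientwise) are relatively prime in
`K[x₁,…,xₙ]`. -/
theorem squarefree_isRelPrime_deriv (p : ℕ) [Fact p.Prime]
    (Fq : Type*) [Field Fq] [Fintype Fq] [CharP Fq p]
    (n : ℕ) (f : MvPolynomial (Fin n) (RatFunc Fq))
    (hpow : ∀ m ∈ f.support, ∀ i, p ∣ m i)
    (hf : Squarefree f)
    (D : Derivation Fq (RatFunc Fq) (RatFunc Fq)) (hD : D RatFunc.X = 1) :
    IsRelPrime f
      (∑ m ∈ f.support, MvPolynomial.monomial m (D (MvPolynomial.coeff m f))) := by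
  have : CharP (RatFunc Fq) p := charP_of_injective_algebraMap (algebraMap Fq _).injective p
  have hf_pderiv (i : Fin n) : pderiv i f = 0 :=
    (pderiv_eq_zero_iff_dvd p).mpr fun m hm => hpow m hm i
  change IsRelPrime f (D.mvMapCoeffs f)
  refine (UniqueFactorizationMonoid.isRelPrime_iff_no_prime_factors hf.ne_zero).mpr
    fun q₀ hq₀f hq₀Df hq₀ => ?_
  obtain ⟨q, hq₀q, m, hm⟩ := exists_associated_coeff_eq_one hq₀.ne_zero
  have hq : Prime q := hq₀q.prime hq₀
  have hqf : q ∣ f := hq₀q.symm.dvd.trans hq₀f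
  have hDq : D.mvMapCoeffs q = 0 := D.mvMapCoeffs_eq_zero_of_dvd hm <|
    D.mvMapCoeffs.dvd_apply_self_of_prime_dvd_squarefree hq hf hqf (hq₀q.symm.dvd.trans hq₀Df)
  have hpderiv (i : Fin n) : pderiv i q = 0 := pderiv_eq_zero_of_dvd <|
    (pderiv i).dvd_apply_self_of_prime_dvd_squarefree hq hf hqf ((hf_pderiv i).symm ▸ dvd_zero q)
  obtain ⟨g, rfl⟩ := exists_pow_eq_of_dvd_of_coeff p
    (fun m hm i => (pderiv_eq_zero_iff_dvd p).mp (hpderiv i) m hm)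
    fun m _ => RatFunc.exists_pow_eq_of_derivation_eq_zero p D hD <| by
      rw [← Derivation.coeff_mvMapCoeffs, hDq, coeff_zero]
  exact not_irreducible_pow (Fact.out : p.Prime).ne_one hq.irreducible
end

section
/- Let f(x) ∈ ℤ[x] be squarefree as an element of ℚ[x], and let s(k) denote the largest integer whose square divides k. For each fixed prime ℓ, the set of positive integers n such that s(f(n)) is divisible by ℓ^m has density tending to 0 as m → ∞; equivalently, the number of n ∈ ℤ/ℓ^{2m} with f(n) ≡ 0 (mod ℓ^{2m}) is O(1) as m → ∞. -/
open Polynomial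

/-- Clearing denominators in the Bézout identity coming from separability. -/
lemma exists_bezout_int (f : Polynomial ℤ)
    (hf : Squarefree (f.map (Int.castRingHom ℚ))) :
    ∃ (A B : Polynomial ℤ) (N : ℤ), N ≠ 0 ∧
      A * f + B * Polynomial.derivative f = Polynomial.C N := by
  have hsep : (f.map (Int.castRingHom ℚ)).Separable :=
    (PerfectField.separable_iff_squarefree).mpr hf
  obtain ⟨a, b, hab⟩ := hsep
  obtain ⟨c, hc⟩ := IsLocalization.integerNormalization_map_to_map (nonZeroDivisors ℤ) a
  obtain ⟨e, he⟩ := IsLocalization.integerNormalization_map_to_map (nonZeroDivisors ℤ) b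
  set A : Polynomial ℤ := IsLocalization.integerNormalization (nonZeroDivisors ℤ) a with hA
  set B : Polynomial ℤ := IsLocalization.integerNormalization (nonZeroDivisors ℤ) b with hB
  have hc' : A.map (Int.castRingHom ℚ) = Polynomial.C ((c : ℤ) : ℚ) * a := by
    have : algebraMap ℤ ℚ = Int.castRingHom ℚ := rfl
    rw [← this, hc, ← Int.cast_smul_eq_zsmul ℚ, smul_eq_C_mul]
  have he' : B.map (Int.castRingHom ℚ) = Polynomial.C ((e : ℤ) : ℚ) * b := by
    have : algebraMap ℤ ℚ = Int.castRingHom ℚ := rfl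
    rw [← this, he, ← Int.cast_smul_eq_zsmul ℚ, smul_eq_C_mul]
  have hcne : (c : ℤ) ≠ 0 := nonZeroDivisors.coe_ne_zero c
  have hene : (e : ℤ) ≠ 0 := nonZeroDivisors.coe_ne_zero e
  refine ⟨Polynomial.C (e : ℤ) * A, Polynomial.C (c : ℤ) * B, (c : ℤ) * (e : ℤ),
    mul_ne_zero hcne hene, ?_⟩
  apply Polynomial.map_injective (Int.castRingHom ℚ) Int.cast_injective
  rw [Polynomial.map_add, Polynomial.map_mul, Polynomial.map_mul, Polynomial.map_mul,
    Polynomial.map_mul, Polynomial.map_C, Polynomial.map_C, Polynomial.map_C, hc', he',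
    ← Polynomial.derivative_map]
  simp only [Int.coe_castRingHom, Int.cast_mul, Polynomial.C_mul]
  linear_combination (Polynomial.C ((c : ℤ) : ℚ) * Polynomial.C ((e : ℤ) : ℚ)) * hab

/-- The key arithmetic lemma: two roots of `f` modulo `ℓ^(2m)` that agree modulo
`ℓ^(v+1)` in fact agree modulo `ℓ^(2m - v)`, where `v` is the `ℓ`-adic valuation of
the "discriminant" `N`. -/
lemma key_lemma (f A B : Polynomial ℤ) (N : ℤ) (hN : N ≠ 0)
    (hid : A * f + B * Polynomial.derivative f = Polynomial.C N)
    (ℓ : ℕ) (hl : ℓ.Prime) (m : ℕ)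
    (hm : 2 * (N.natAbs.factorization ℓ) + 1 ≤ 2 * m)
    (x y : ℤ) (hx : (ℓ : ℤ) ^ (2 * m) ∣ f.eval x) (hy : (ℓ : ℤ) ^ (2 * m) ∣ f.eval y)
    (hxy : (ℓ : ℤ) ^ (N.natAbs.factorization ℓ + 1) ∣ y - x) :
    (ℓ : ℤ) ^ (2 * m - N.natAbs.factorization ℓ) ∣ y - x := by
  set v := N.natAbs.factorization ℓ with hv
  have hpZ : Prime (ℓ : ℤ) := Nat.prime_iff_prime_int.mp hl
  by_contra hcon
  have hd0 : y - x ≠ 0 := by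
    intro h; rw [h] at hcon; exact hcon (dvd_zero _)
  set d := y - x with hd
  have hdnat : d.natAbs ≠ 0 := Int.natAbs_ne_zero.mpr hd0
  set t := d.natAbs.factorization ℓ with ht
  -- ℓ^(v+1) ∣ d gives v + 1 ≤ t
  have hvt : v + 1 ≤ t := by
    rw [ht, ← Nat.Prime.pow_dvd_iff_le_factorization hl hdnat]
    have h1 : ((ℓ : ℤ) ^ (v + 1)).natAbs ∣ d.natAbs := Int.natAbs_dvd_natAbs.mpr hxy
    simpa [Int.natAbs_pow] using h1
  -- ℓ^t ∣ d over ℤ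
  have hℓt : (ℓ : ℤ) ^ t ∣ d := by
    have h1 : ℓ ^ t ∣ d.natAbs := Nat.ordProj_dvd _ _
    have h2 : ((ℓ ^ t : ℕ) : ℤ) ∣ (d.natAbs : ℤ) := Int.natCast_dvd_natCast.mpr h1
    rw [Int.dvd_natAbs] at h2
    exact_mod_cast h2
  obtain ⟨u, hu⟩ := hℓt
  have hu' : ¬ (ℓ : ℤ) ∣ u := by
    intro hdvd
    obtain ⟨w, hw⟩ := hdvd
    have : ℓ ^ (t + 1) ∣ d.natAbs := by
      have : ((ℓ : ℤ) ^ (t + 1)) ∣ d := ⟨w, by rw [hu, hw]; ring⟩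
      have h2 := Int.natAbs_dvd_natAbs.mpr this
      simpa [Int.natAbs_pow] using h2
    exact Nat.pow_succ_factorization_not_dvd hdnat hl this
  -- if t were large, the conclusion would hold
  have htlt : t + v + 1 ≤ 2 * m := by
    by_contra hcon2
    push_neg at hcon2
    exact hcon ((pow_dvd_pow (ℓ : ℤ) (by omega : 2 * m - v ≤ t)).trans ⟨u, hu⟩)
  -- Taylor expansion
  obtain ⟨k, hk⟩ := f.binomExpansion x d
  have hxd : x + d = y := by rw [hd]; ring
  rw [hxd] at hk
  have hsum : (ℓ : ℤ) ^ (t + v + 1) ∣ f.derivative.eval x * d + k * d ^ 2 := by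
    have h1 : (ℓ : ℤ) ^ (2 * m) ∣ f.derivative.eval x * d + k * d ^ 2 := by
      have : f.derivative.eval x * d + k * d ^ 2 = f.eval y - f.eval x := by
        rw [hk]; ring
      rw [this]
      exact dvd_sub hy hx
    exact (pow_dvd_pow (ℓ : ℤ) htlt).trans h1
  have hsq : (ℓ : ℤ) ^ (t + v + 1) ∣ k * d ^ 2 := by
    have h1 : (ℓ : ℤ) ^ (2 * t) ∣ d ^ 2 := by
      rw [hu]; exact ⟨u ^ 2, by ring⟩
    exact dvd_mul_of_dvd_right ((pow_dvd_pow (ℓ : ℤ) (by omega : t + v + 1 ≤ 2 * t)).trans h1) k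
  have hlin : (ℓ : ℤ) ^ (t + v + 1) ∣ f.derivative.eval x * d := by
    have := dvd_sub hsum hsq
    simpa using this
  -- cancel ℓ^t
  have hcancel : (ℓ : ℤ) ^ (v + 1) ∣ f.derivative.eval x * u := by
    have hne : (ℓ : ℤ) ^ t ≠ 0 := pow_ne_zero _ hpZ.ne_zero
    have h1 : (ℓ : ℤ) ^ t * ((ℓ : ℤ) ^ (v + 1)) ∣ (ℓ : ℤ) ^ t * (f.derivative.eval x * u) := by
      have e1 : (ℓ : ℤ) ^ t * (ℓ : ℤ) ^ (v + 1) = (ℓ : ℤ) ^ (t + v + 1) := by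
        rw [← pow_add]; ring_nf
      have e2 : (ℓ : ℤ) ^ t * (f.derivative.eval x * u) = f.derivative.eval x * d := by
        rw [hu]; ring
      rw [e1, e2]; exact hlin
    exact (mul_dvd_mul_iff_left hne).mp h1
  have hder : (ℓ : ℤ) ^ (v + 1) ∣ f.derivative.eval x :=
    hpZ.pow_dvd_of_dvd_mul_right _ hu' hcancel
  -- evaluate the Bézout identity at x
  have heval : A.eval x * f.eval x + B.eval x * f.derivative.eval x = N := by
    have := congrArg (Polynomial.eval x) hid
    simpa using this
  have hdvdN : (ℓ : ℤ) ^ (v + 1) ∣ N := by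
    rw [← heval]
    exact dvd_add
      (dvd_mul_of_dvd_right ((pow_dvd_pow (ℓ : ℤ) (by omega : v + 1 ≤ 2 * m)).trans hx) _)
      (dvd_mul_of_dvd_right hder _)
  have : ℓ ^ (v + 1) ∣ N.natAbs := by
    have h2 := Int.natAbs_dvd_natAbs.mpr hdvdN
    simpa [Int.natAbs_pow] using h2
  exact Nat.pow_succ_factorization_not_dvd (Int.natAbs_ne_zero.mpr hN) hl this

/-- If `f ∈ ℤ[x]` is squarefree in `ℚ[x]`, then for each fixed prime `ℓ` the number of
residues `n ∈ ℤ/ℓ^{2m}` with `f(n) ≡ 0 (mod ℓ^{2m})` is `O(1)` as `m → ∞`. -/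
theorem count_roots_mod_prime_power_bounded (f : Polynomial ℤ)
    (hf : Squarefree (f.map (Int.castRingHom ℚ))) (ℓ : ℕ) (hl : ℓ.Prime) :
    ∃ C : ℕ, ∀ m : ℕ,
      Nat.card {x : ZMod (ℓ ^ (2 * m)) //
        (f.map (Int.castRingHom (ZMod (ℓ ^ (2 * m))))).eval x = 0} ≤ C := by
  obtain ⟨A, B, N, hN, hid⟩ := exists_bezout_int f hf
  set v := N.natAbs.factorization ℓ with hv
  refine ⟨ℓ ^ (2 * v + 1), fun m => ?_⟩
  haveI : NeZero (ℓ ^ (2 * m)) := ⟨pow_ne_zero _ hl.ne_zero⟩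
  by_cases hm : 2 * v + 1 ≤ 2 * m
  · -- main case: build an injection into `Fin (ℓ^(v+1)) × Fin (ℓ^v)`
    set S := {x : ZMod (ℓ ^ (2 * m)) //
        (f.map (Int.castRingHom (ZMod (ℓ ^ (2 * m))))).eval x = 0} with hS
    have hpos1 : 0 < ℓ ^ (v + 1) := pow_pos hl.pos _
    have hpow : ℓ ^ (2 * m) = ℓ ^ (2 * m - v) * ℓ ^ v := by
      rw [← pow_add]; congr 1; omega
    have key : ∀ a : S, (ℓ : ℤ) ^ (2 * m) ∣ f.eval ((a.1.val : ℤ)) := by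
      intro a
      have e : (((a.1.val : ℤ)) : ZMod (ℓ ^ (2 * m))) = a.1 := by
        push_cast
        exact ZMod.natCast_rightInverse a.1
      have h1 : (f.map (Int.castRingHom (ZMod (ℓ ^ (2 * m))))).eval
          (((a.1.val : ℤ)) : ZMod (ℓ ^ (2 * m))) =
          ((f.eval ((a.1.val : ℤ)) : ℤ) : ZMod (ℓ ^ (2 * m))) := by
        rw [Polynomial.eval_map]
        exact Polynomial.eval₂_hom (Int.castRingHom (ZMod (ℓ ^ (2 * m)))) _
      rw [e, a.2] at h1
      have h2 := (ZMod.intCast_zmod_eq_zero_iff_dvd _ _).mp h1.symm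
      exact_mod_cast h2
    set g : S → Fin (ℓ ^ (v + 1)) × Fin (ℓ ^ v) := fun a =>
      (⟨a.1.val % ℓ ^ (v + 1), Nat.mod_lt _ hpos1⟩,
       ⟨a.1.val / ℓ ^ (2 * m - v), by
          apply Nat.div_lt_of_lt_mul
          rw [← hpow]
          exact a.1.val_lt⟩) with hg
    have hginj : Function.Injective g := by
      intro a b hab
      have e1 : a.1.val % ℓ ^ (v + 1) = b.1.val % ℓ ^ (v + 1) := by
        have := congrArg (fun p => p.1.val) hab
        simpa [hg] using this
      have e2 : a.1.val / ℓ ^ (2 * m - v) = b.1.val / ℓ ^ (2 * m - v) := by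
        have := congrArg (fun p => p.2.val) hab
        simpa [hg] using this
      have hmeq : a.1.val ≡ b.1.val [MOD ℓ ^ (v + 1)] := e1
      have hdvd1 : (ℓ : ℤ) ^ (v + 1) ∣ (b.1.val : ℤ) - (a.1.val : ℤ) := by
        have := (Nat.modEq_iff_dvd.mp hmeq)
        push_cast at this ⊢
        simpa using this
      have hdvd2 := key_lemma f A B N hN hid ℓ hl m (by omega) _ _ (key a) (key b) hdvd1
      have hmod2 : a.1.val ≡ b.1.val [MOD ℓ ^ (2 * m - v)] := by
        rw [Nat.modEq_iff_dvd]
        push_cast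
        exact_mod_cast hdvd2
      have e3 : a.1.val % ℓ ^ (2 * m - v) = b.1.val % ℓ ^ (2 * m - v) := hmod2
      have h4 := Nat.div_add_mod a.1.val (ℓ ^ (2 * m - v))
      have h5 := Nat.div_add_mod b.1.val (ℓ ^ (2 * m - v))
      rw [e2, e3] at h4
      have hval : a.1.val = b.1.val := by omega
      exact Subtype.ext (ZMod.val_injective _ hval)
    calc Nat.card S ≤ Nat.card (Fin (ℓ ^ (v + 1)) × Fin (ℓ ^ v)) :=
          Nat.card_le_card_of_injective g hginj
      _ = ℓ ^ (v + 1) * ℓ ^ v := by simp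
      _ = ℓ ^ (2 * v + 1) := by rw [← pow_add]; congr 1; omega
  · calc Nat.card {x : ZMod (ℓ ^ (2 * m)) //
        (f.map (Int.castRingHom (ZMod (ℓ ^ (2 * m))))).eval x = 0}
        ≤ Nat.card (ZMod (ℓ ^ (2 * m))) := Finite.card_subtype_le _
      _ = ℓ ^ (2 * m) := Nat.card_zmod _
      _ ≤ ℓ ^ (2 * v + 1) := Nat.pow_le_pow_right hl.one_lt.le (by omega)
end

section
/- Let A be the ring of regular functions on U = X ∖ S, where X is a smooth projective geometrically integral curve of genus g over F_q of characteristic p and S is a finite nonempty set of closed points. Let E be the divisor (p+1)(2g+5)·Σ_{𝔭∈S} 𝔭. Then for every effective divisor D supported on S and every a ∈ L(D), one can write a = t₁a₁^p + ⋯ + t_m a_m^p with t_i ∈ L(E), a_i ∈ A, and t_i a_i^p ∈ L(D) for each i. -/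
/-- The degree of a divisor `D = Σ n_P · P` on a curve whose closed point `P` has residue
degree `dg P`. -/
def divisorDeg {Pt : Type*} (dg : Pt → ℕ) (D : Pt →₀ ℤ) : ℤ :=
  D.sum fun P k => k * dg P

/-- The Riemann–Roch space `L(D) = {f ∈ K* : div(f) + D ≥ 0} ∪ {0}`, for a field `K` with
a family of additive valuations `ord P` indexed by closed points `P`. -/
def RRSpace {K Pt : Type*} [Zero K] (ord : Pt → K → ℤ) (D : Pt →₀ ℤ) : Set K :=
  {f | f = 0 ∨ ∀ P, -(D P) ≤ ord P f}

/-!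
Induct on `D`. If every coefficient of `D` is at most `(p+1)(2g+5)`, then `a ∈ L(E)` already and
`a = a · 1ᵖ`. Otherwise some `𝔭 ∈ S` has `D 𝔭 = i + p j` with `2g+4 ≤ i < 2g+4+p` and `2g+4 ≤ j`.
Since `ℓ(j𝔭) > ℓ((j-1)𝔭)` by Riemann–Roch, there is an `f` whose only pole is one of order
exactly `j` at `𝔭`. Multiplication by `fᵖ` embeds `L(i𝔭)` into `L(D)`, and because the pole order
of `fᵖ` at `𝔭` is exactly `p j`, its image meets `L(D - 𝔭)` inside `fᵖ L((i-1)𝔭)`. Riemann–Roch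
gives `ℓ(i𝔭) - ℓ((i-1)𝔭) = deg 𝔭 = ℓ(D) - ℓ(D - 𝔭)`, so `L(D) = fᵖ L(i𝔭) + L(D - 𝔭)`: write
`a = t fᵖ + b` with `t ∈ L(i𝔭) ⊆ L(E)` and `b ∈ L(D - 𝔭)`, and recurse on `b`.
-/

open Module

lemma Submodule.sup_eq_of_finrank_add_le {k V : Type*} [DivisionRing k] [AddCommGroup V]
    [Module k V] {M N W : Submodule k V} [FiniteDimensional k W] (hM : M ≤ W) (hN : N ≤ W)
    (h : finrank k W + finrank k ↥(M ⊓ N) ≤ finrank k M + finrank k N) : M ⊔ N = W := by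
  have := Submodule.finiteDimensional_of_le hM
  have := Submodule.finiteDimensional_of_le hN
  refine Submodule.eq_of_le_of_finrank_le (sup_le hM hN) ?_
  have := Submodule.finrank_sup_add_finrank_inf_eq M N
  omega

def HasPowDecomposition {R : Type*} [CommSemiring R] (p : ℕ) (T W B : Set R) (a : R) : Prop :=
  ∃ (m : ℕ) (t w : Fin m → R), (∀ i, t i ∈ T) ∧ (∀ i, w i ∈ W) ∧ (∀ i, t i * w i ^ p ∈ B) ∧
    a = ∑ i, t i * w i ^ p

namespace HasPowDecomposition

variable {R : Type*} [CommSemiring R] {p : ℕ} {T W B : Set R}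

lemma zero : HasPowDecomposition p T W B 0 :=
  ⟨0, Fin.elim0, Fin.elim0, nofun, nofun, nofun, by simp⟩

lemma cons {t w b : R} (ht : t ∈ T) (hw : w ∈ W) (htw : t * w ^ p ∈ B)
    (hb : HasPowDecomposition p T W B b) : HasPowDecomposition p T W B (t * w ^ p + b) := by
  obtain ⟨m, t', w', ht', hw', htw', rfl⟩ := hb
  refine ⟨m + 1, Fin.cons t t', Fin.cons w w', Fin.cases ht ht', Fin.cases hw hw',
    Fin.cases htw htw', ?_⟩
  simp [Fin.sum_univ_succ]

lemma mono {B' : Set R} (hB : B ⊆ B') {a : R} (ha : HasPowDecomposition p T W B a) :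
    HasPowDecomposition p T W B' a :=
  let ⟨m, t, w, ht, hw, htw, hsum⟩ := ha
  ⟨m, t, w, ht, hw, fun i => hB (htw i), hsum⟩

end HasPowDecomposition

lemma exists_eq_add_mul_of_lt {p g : ℕ} (hp : 0 < p) {n : ℤ}
    (hn : ((p : ℤ) + 1) * (2 * g + 5) < n) :
    ∃ i j : ℤ, n = i + p * j ∧ 2 * (g : ℤ) + 4 ≤ i ∧ i < 2 * g + 4 + p ∧ 2 * (g : ℤ) + 4 ≤ j := by
  have hp' : (0 : ℤ) < p := by exact_mod_cast hp
  have hdiv := Int.mul_ediv_add_emod (n - (2 * g + 4)) p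
  have hr0 := Int.emod_nonneg (n - (2 * g + 4)) hp'.ne'
  have hrp := Int.emod_lt_of_pos (n - (2 * g + 4)) hp'
  refine ⟨2 * g + 4 + (n - (2 * g + 4)) % p, (n - (2 * g + 4)) / p, by linarith, by linarith,
    by linarith, ?_⟩
  by_contra! hj
  nlinarith

structure IsValuationFamily (Fq : Type*) {K Pt : Type*} [Field Fq] [Field K] [Algebra Fq K]
    (ord : Pt → K → ℤ) : Prop where
  map_mul : ∀ P (f h : K), f ≠ 0 → h ≠ 0 → ord P (f * h) = ord P f + ord P h
  min_le_map_add : ∀ P (f h : K), f ≠ 0 → h ≠ 0 → f + h ≠ 0 →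
    min (ord P f) (ord P h) ≤ ord P (f + h)
  map_algebraMap : ∀ P (c : Fq), c ≠ 0 → ord P (algebraMap Fq K c) = 0

def RiemannRochHolds (Fq : Type*) [Fintype Fq] {K Pt : Type*} [Zero K] (ord : Pt → K → ℤ)
    (dg : Pt → ℕ) (g : ℕ) : Prop :=
  ∀ D : Pt →₀ ℤ, 2 * (g : ℤ) - 2 < divisorDeg dg D →
    (Nat.card (RRSpace ord D) : ℝ) = (Fintype.card Fq : ℝ) ^ (divisorDeg dg D + 1 - (g : ℤ))

section Divisor

variable {Pt : Type*} {dg : Pt → ℕ}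

lemma divisorDeg_single (𝔭 : Pt) (n : ℤ) : divisorDeg dg (Finsupp.single 𝔭 n) = n * dg 𝔭 := by
  simp [divisorDeg]

lemma divisorDeg_sub (D D' : Pt →₀ ℤ) :
    divisorDeg dg (D - D') = divisorDeg dg D - divisorDeg dg D' :=
  Finsupp.sum_sub_index fun _ _ _ => sub_mul _ _ _

lemma divisorDeg_nonneg {D : Pt →₀ ℤ} (hD : ∀ P, 0 ≤ D P) : 0 ≤ divisorDeg dg D :=
  Finset.sum_nonneg fun P _ => mul_nonneg (hD P) (Nat.cast_nonneg _)

lemma mul_le_divisorDeg {D : Pt →₀ ℤ} (hD : ∀ P, 0 ≤ D P) (𝔭 : Pt) :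
    D 𝔭 * dg 𝔭 ≤ divisorDeg dg D := by
  classical
  have hnonneg : ∀ P ∈ D.support, 0 ≤ D P * (dg P : ℤ) := fun P _ => by
    have := hD P; positivity
  by_cases h𝔭 : 𝔭 ∈ D.support
  · exact Finset.single_le_sum hnonneg h𝔭
  · rw [Finsupp.notMem_support_iff.mp h𝔭, zero_mul]
    exact divisorDeg_nonneg hD

open Classical in
lemma sum_single_apply (S : Finset Pt) (C : ℤ) (P : Pt) :
    (∑ 𝔭 ∈ S, Finsupp.single 𝔭 C) P = if P ∈ S then C else 0 := by
  simp [Finsupp.finsetSum_apply, Finsupp.single_apply]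

lemma le_sum_single {S : Finset Pt} {C : ℤ} {D : Pt →₀ ℤ} (hDS : ↑D.support ⊆ (S : Set Pt))
    (hDC : ∀ P, D P ≤ C) (P : Pt) : D P ≤ (∑ 𝔭 ∈ S, Finsupp.single 𝔭 C) P := by
  rw [sum_single_apply]
  split_ifs with hP
  · exact hDC P
  · exact (Finsupp.notMem_support_iff.mp fun h => hP (hDS h)).le

lemma single_le_sum_single {S : Finset Pt} {C : ℤ} {𝔭 : Pt} (h𝔭 : 𝔭 ∈ S) {i : ℤ} (hi : 0 ≤ i)
    (hiC : i ≤ C) (P : Pt) : Finsupp.single 𝔭 i P ≤ (∑ 𝔭 ∈ S, Finsupp.single 𝔭 C) P := by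
  classical
  rw [sum_single_apply, Finsupp.single_apply]
  split_ifs with hP hPS hPS
  · exact hiC
  · exact absurd (hP ▸ h𝔭) hPS
  · exact hi.trans hiC
  · exact le_rfl

lemma sub_single_nonneg {D : Pt →₀ ℤ} (hD : ∀ P, 0 ≤ D P) {𝔭 : Pt} {n : ℤ} (hn : n ≤ D 𝔭)
    (P : Pt) : 0 ≤ (D - Finsupp.single 𝔭 n) P := by
  classical
  rw [Finsupp.coe_sub, Pi.sub_apply, Finsupp.single_apply]
  split_ifs with hP
  · subst hP; omega
  · simpa using hD P

lemma support_sub_single_subset {S : Set Pt} {D : Pt →₀ ℤ} (hDS : ↑D.support ⊆ S) {𝔭 : Pt}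
    (h𝔭 : 𝔭 ∈ S) (n : ℤ) : ↑(D - Finsupp.single 𝔭 n).support ⊆ S := fun P hP => by
  classical
  rcases Finset.mem_union.mp (Finsupp.support_sub hP) with hP | hP
  · exact hDS hP
  · rwa [Finset.mem_singleton.mp (Finsupp.support_single_subset hP)]

lemma two_mul_sub_two_lt_divisorDeg_single {g : ℕ} {𝔭 : Pt} (h𝔭 : 0 < dg 𝔭) {n : ℤ}
    (hn : 2 * (g : ℤ) ≤ n) : 2 * (g : ℤ) - 2 < divisorDeg dg (Finsupp.single 𝔭 n) := by
  have : (1 : ℤ) ≤ dg 𝔭 := by exact_mod_cast h𝔭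
  rw [divisorDeg_single]
  nlinarith

end Divisor

namespace IsValuationFamily

variable {Fq K Pt : Type*} [Field Fq] [Field K] [Algebra Fq K] {ord : Pt → K → ℤ}

lemma map_one (hv : IsValuationFamily Fq ord) (P : Pt) : ord P 1 = 0 := by
  have := hv.map_mul P 1 1 one_ne_zero one_ne_zero
  rw [mul_one] at this
  omega

lemma map_pow (hv : IsValuationFamily Fq ord) (P : Pt) {f : K} (hf : f ≠ 0) (n : ℕ) :
    ord P (f ^ n) = n * ord P f := by
  induction n with
  | zero => simpa using hv.map_one P
  | succ n ih =>
    rw [pow_succ, hv.map_mul P _ f (pow_ne_zero _ hf) hf, ih]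
    push_cast
    ring

lemma map_smul (hv : IsValuationFamily Fq ord) (P : Pt) {c : Fq} (hc : c ≠ 0) {f : K}
    (hf : f ≠ 0) : ord P (c • f) = ord P f := by
  rw [Algebra.smul_def, hv.map_mul P _ f (by simpa using hc) hf, hv.map_algebraMap P c hc,
    zero_add]

end IsValuationFamily

namespace RRSpace

variable {K Pt : Type*} [Field K] {ord : Pt → K → ℤ} {D D' : Pt →₀ ℤ}

lemma zero_mem : (0 : K) ∈ RRSpace ord D := Or.inl rfl

lemma mem_iff_of_ne_zero {f : K} (hf : f ≠ 0) :
    f ∈ RRSpace ord D ↔ ∀ P, -D P ≤ ord P f :=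
  or_iff_right hf

lemma mono (h : ∀ P, D P ≤ D' P) : RRSpace ord D ⊆ RRSpace ord D' := fun _ hf =>
  hf.imp_right fun hf P => (neg_le_neg (h P)).trans (hf P)

lemma sub_single_subset (𝔭 : Pt) {n : ℤ} (hn : 0 ≤ n) :
    RRSpace ord (D - Finsupp.single 𝔭 n) ⊆ RRSpace ord D :=
  mono fun P => by
    simp only [Finsupp.coe_sub, Pi.sub_apply, sub_le_self_iff]
    exact Finsupp.single_nonneg.mpr hn P

lemma one_mem {Fq : Type*} [Field Fq] [Algebra Fq K] (hv : IsValuationFamily Fq ord)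
    (hD : ∀ P, 0 ≤ D P) : (1 : K) ∈ RRSpace ord D :=
  Or.inr fun P => by simpa [hv.map_one P] using hD P

lemma mul_mem {Fq : Type*} [Field Fq] [Algebra Fq K] (hv : IsValuationFamily Fq ord) {f h : K}
    (hf : f ∈ RRSpace ord D) (hh : h ∈ RRSpace ord D') : f * h ∈ RRSpace ord (D + D') := by
  rcases eq_or_ne f 0 with rfl | hf0
  · simpa using zero_mem
  rcases eq_or_ne h 0 with rfl | hh0
  · simpa using zero_mem
  rw [mem_iff_of_ne_zero hf0] at hf
  rw [mem_iff_of_ne_zero hh0] at hh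
  refine Or.inr fun P => ?_
  rw [hv.map_mul P f h hf0 hh0, Finsupp.add_apply]
  linarith [hf P, hh P]

lemma pow_mem {Fq : Type*} [Field Fq] [Algebra Fq K] (hv : IsValuationFamily Fq ord) {f : K}
    (hf : f ∈ RRSpace ord D) (n : ℕ) : f ^ n ∈ RRSpace ord (n • D) := by
  induction n with
  | zero => simpa using one_mem hv fun _ => le_rfl
  | succ n ih => simpa [pow_succ, succ_nsmul] using mul_mem hv ih hf

end RRSpace

section Curve

variable {Fq K Pt : Type*} [Field Fq] [Field K] [Algebra Fq K] {ord : Pt → K → ℤ}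

def rrSubmodule (hv : IsValuationFamily Fq ord) (D : Pt →₀ ℤ) : Submodule Fq K where
  carrier := RRSpace ord D
  zero_mem' := RRSpace.zero_mem
  add_mem' {f h} hf hh := by
    by_cases hfh : f + h = 0
    · exact Or.inl hfh
    rcases eq_or_ne f 0 with rfl | hf0
    · simpa using hh
    rcases eq_or_ne h 0 with rfl | hh0
    · simpa using hf
    have hf' := (RRSpace.mem_iff_of_ne_zero hf0).mp hf
    have hh' := (RRSpace.mem_iff_of_ne_zero hh0).mp hh
    exact Or.inr fun P => (le_min (hf' P) (hh' P)).trans (hv.min_le_map_add P f h hf0 hh0 hfh)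
  smul_mem' c f hf := by
    rcases eq_or_ne c 0 with rfl | hc
    · simpa using RRSpace.zero_mem
    rcases eq_or_ne f 0 with rfl | hf0
    · simpa using RRSpace.zero_mem
    exact Or.inr fun P => hv.map_smul P hc hf0 ▸ (RRSpace.mem_iff_of_ne_zero hf0).mp hf P

section Reduction

variable {p : ℕ} {D : Pt →₀ ℤ} {𝔭 : Pt} {i j : ℤ} {t f : K}

lemma mul_pow_mem_RRSpace (hv : IsValuationFamily Fq ord) (hD : ∀ P, 0 ≤ D P)
    (h𝔭 : D 𝔭 = i + p * j) (ht : t ∈ RRSpace ord (Finsupp.single 𝔭 i))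
    (hf : f ∈ RRSpace ord (Finsupp.single 𝔭 j)) : t * f ^ p ∈ RRSpace ord D := by
  refine RRSpace.mono (fun P => ?_) (RRSpace.mul_mem hv ht (RRSpace.pow_mem hv hf p))
  by_cases hP : P = 𝔭
  · subst hP
    simp [h𝔭]
  · simp [Finsupp.single_eq_of_ne' (Ne.symm hP), hD P]

lemma mem_RRSpace_single_sub_one_of_mul_pow_mem (hv : IsValuationFamily Fq ord)
    (h𝔭 : D 𝔭 = i + p * j) (hf0 : f ≠ 0) (hford : ord 𝔭 f = -j)
    (ht : t ∈ RRSpace ord (Finsupp.single 𝔭 i))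
    (htf : t * f ^ p ∈ RRSpace ord (D - Finsupp.single 𝔭 1)) :
    t ∈ RRSpace ord (Finsupp.single 𝔭 (i - 1)) := by
  rcases eq_or_ne t 0 with rfl | ht0
  · exact RRSpace.zero_mem
  have htf0 : t * f ^ p ≠ 0 := mul_ne_zero ht0 (pow_ne_zero p hf0)
  rw [RRSpace.mem_iff_of_ne_zero ht0] at ht ⊢
  rw [RRSpace.mem_iff_of_ne_zero htf0] at htf
  intro P
  by_cases hP : P = 𝔭
  · subst hP
    have := htf P
    rw [hv.map_mul P t _ ht0 (pow_ne_zero p hf0), hv.map_pow P hf0, hford] at this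
    simp only [Finsupp.coe_sub, Pi.sub_apply, Finsupp.single_eq_same, h𝔭] at this ⊢
    linarith
  · simpa [Finsupp.single_eq_of_ne' (Ne.symm hP)] using ht P

end Reduction

section RiemannRoch

variable [Fintype Fq] {dg : Pt → ℕ} {g : ℕ}

lemma finiteDimensional_rrSubmodule (hv : IsValuationFamily Fq ord)
    (hRR : RiemannRochHolds Fq ord dg g) {D : Pt →₀ ℤ} (hD : 2 * (g : ℤ) - 2 < divisorDeg dg D) :
    FiniteDimensional Fq (rrSubmodule hv D) := by
  have hq : (0 : ℝ) < Fintype.card Fq := by exact_mod_cast Fintype.card_pos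
  have hcard : Nat.card (rrSubmodule hv D) ≠ 0 := by
    have h := hRR D hD
    intro h0
    rw [show Nat.card (RRSpace ord D) = 0 from h0, Nat.cast_zero] at h
    exact (zpow_pos hq _).ne h
  have := Nat.finite_of_card_ne_zero hcard
  exact .of_finite

lemma finrank_rrSubmodule (hv : IsValuationFamily Fq ord)
    (hRR : RiemannRochHolds Fq ord dg g) {D : Pt →₀ ℤ} (hD : 2 * (g : ℤ) - 2 < divisorDeg dg D) :
    (finrank Fq (rrSubmodule hv D) : ℤ) = divisorDeg dg D + 1 - g := by
  have := finiteDimensional_rrSubmodule hv hRR hD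
  have hq : (1 : ℝ) < Fintype.card Fq := by exact_mod_cast Fintype.one_lt_card
  refine zpow_right_injective₀ (by linarith : (0 : ℝ) < Fintype.card Fq) hq.ne' ?_
  have h := hRR D hD
  rw [show Nat.card (RRSpace ord D) = Nat.card (rrSubmodule hv D) from rfl,
    Module.natCard_eq_pow_finrank (K := Fq) (V := rrSubmodule hv D),
    Nat.card_eq_fintype_card] at h
  simpa using h

lemma exists_mem_RRSpace_single_ord_eq_neg (hv : IsValuationFamily Fq ord)
    (hRR : RiemannRochHolds Fq ord dg g) {𝔭 : Pt} (h𝔭 : 0 < dg 𝔭) {j : ℤ}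
    (hj : 2 * (g : ℤ) + 1 ≤ j) :
    ∃ f ∈ RRSpace ord (Finsupp.single 𝔭 j), f ≠ 0 ∧ ord 𝔭 f = -j := by
  have hdeg := two_mul_sub_two_lt_divisorDeg_single (g := g) h𝔭 (by omega : 2 * (g : ℤ) ≤ j)
  have hdeg' := two_mul_sub_two_lt_divisorDeg_single (g := g) h𝔭 (by omega : 2 * (g : ℤ) ≤ j - 1)
  have hnle :
      ¬ rrSubmodule hv (Finsupp.single 𝔭 j) ≤ rrSubmodule hv (Finsupp.single 𝔭 (j - 1)) := by
    intro hle
    have := finiteDimensional_rrSubmodule hv hRR hdeg'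
    have hrank := Submodule.finrank_mono hle
    have e := finrank_rrSubmodule hv hRR hdeg
    have e' := finrank_rrSubmodule hv hRR hdeg'
    rw [divisorDeg_single] at e e'
    have : (1 : ℤ) ≤ dg 𝔭 := by exact_mod_cast h𝔭
    zify at hrank
    nlinarith
  obtain ⟨f, hf, hf'⟩ := SetLike.not_le_iff_exists.mp hnle
  have hf0 : f ≠ 0 := by rintro rfl; exact hf' RRSpace.zero_mem
  refine ⟨f, hf, hf0, le_antisymm ?_ (by simpa using (RRSpace.mem_iff_of_ne_zero hf0).mp hf 𝔭)⟩
  by_contra! hlt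
  refine hf' ((RRSpace.mem_iff_of_ne_zero hf0).mpr fun P => ?_)
  by_cases hP : P = 𝔭
  · subst hP
    simp only [Finsupp.single_eq_same]
    omega
  · simpa [Finsupp.single_eq_of_ne' (Ne.symm hP)] using
      (RRSpace.mem_iff_of_ne_zero hf0).mp hf P

lemma map_mulRight_sup_rrSubmodule_eq {p : ℕ} (hv : IsValuationFamily Fq ord)
    (hRR : RiemannRochHolds Fq ord dg g) {D : Pt →₀ ℤ} (hD : ∀ P, 0 ≤ D P) {𝔭 : Pt}
    (hdg : 0 < dg 𝔭) {i j : ℤ} (h𝔭 : D 𝔭 = i + p * j) (hi : 2 * (g : ℤ) + 1 ≤ i) (hj : 0 ≤ j)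
    {f : K} (hf : f ∈ RRSpace ord (Finsupp.single 𝔭 j)) (hf0 : f ≠ 0) (hford : ord 𝔭 f = -j) :
    (rrSubmodule hv (Finsupp.single 𝔭 i)).map (LinearMap.mulRight Fq (f ^ p)) ⊔
      rrSubmodule hv (D - Finsupp.single 𝔭 1) = rrSubmodule hv D := by
  have hd : (1 : ℤ) ≤ dg 𝔭 := by exact_mod_cast hdg
  have hpj : 0 ≤ (p : ℤ) * j := by positivity
  have hdegD_ge : (i + p * j) * dg 𝔭 ≤ divisorDeg dg D := h𝔭 ▸ mul_le_divisorDeg hD 𝔭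
  have hdegD : 2 * (g : ℤ) - 2 < divisorDeg dg D := by nlinarith
  have hdegD' : 2 * (g : ℤ) - 2 < divisorDeg dg (D - Finsupp.single 𝔭 1) := by
    rw [divisorDeg_sub, divisorDeg_single]; nlinarith
  have hdegi := two_mul_sub_two_lt_divisorDeg_single (g := g) hdg (by omega : 2 * (g : ℤ) ≤ i)
  have hdegi' :=
    two_mul_sub_two_lt_divisorDeg_single (g := g) hdg (by omega : 2 * (g : ℤ) ≤ i - 1)
  have := finiteDimensional_rrSubmodule hv hRR hdegD
  have := finiteDimensional_rrSubmodule hv hRR hdegi'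
  set μ := LinearMap.mulRight Fq (f ^ p)
  have hM : (rrSubmodule hv (Finsupp.single 𝔭 i)).map μ ≤ rrSubmodule hv D := by
    rintro _ ⟨t, ht, rfl⟩
    exact mul_pow_mem_RRSpace hv hD h𝔭 ht hf
  have hMN : (rrSubmodule hv (Finsupp.single 𝔭 i)).map μ ⊓
      rrSubmodule hv (D - Finsupp.single 𝔭 1) ≤
        (rrSubmodule hv (Finsupp.single 𝔭 (i - 1))).map μ := by
    rintro _ ⟨⟨t, ht, rfl⟩, htN⟩
    exact ⟨t, mem_RRSpace_single_sub_one_of_mul_pow_mem hv h𝔭 hf0 hford ht htN, rfl⟩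
  refine Submodule.sup_eq_of_finrank_add_le hM (RRSpace.sub_single_subset 𝔭 zero_le_one) ?_
  have eM := (Submodule.equivMapOfInjective μ (mul_left_injective₀ (pow_ne_zero p hf0))
    (rrSubmodule hv (Finsupp.single 𝔭 i))).finrank_eq
  have eMN := (Submodule.finrank_mono hMN).trans (Submodule.finrank_map_le μ _)
  have e1 := finrank_rrSubmodule hv hRR hdegD
  have e2 := finrank_rrSubmodule hv hRR hdegD'
  have e3 := finrank_rrSubmodule hv hRR hdegi
  have e4 := finrank_rrSubmodule hv hRR hdegi'
  rw [divisorDeg_sub, divisorDeg_single] at e2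
  rw [divisorDeg_single] at e3 e4
  zify at eMN ⊢
  rw [← eM]
  linarith

lemma exists_sub_mul_pow_mem_RRSpace_sub_single {p : ℕ} (hv : IsValuationFamily Fq ord)
    (hRR : RiemannRochHolds Fq ord dg g) {D : Pt →₀ ℤ} (hD : ∀ P, 0 ≤ D P) {𝔭 : Pt}
    (hdg : 0 < dg 𝔭) {i j : ℤ} (h𝔭 : D 𝔭 = i + p * j) (hi : 2 * (g : ℤ) + 1 ≤ i) (hj : 0 ≤ j)
    {f : K} (hf : f ∈ RRSpace ord (Finsupp.single 𝔭 j)) (hf0 : f ≠ 0) (hford : ord 𝔭 f = -j)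
    {a : K} (ha : a ∈ RRSpace ord D) :
    ∃ t ∈ RRSpace ord (Finsupp.single 𝔭 i),
      a - t * f ^ p ∈ RRSpace ord (D - Finsupp.single 𝔭 1) := by
  obtain ⟨_, ⟨t, ht, rfl⟩, b, hb, rfl⟩ := Submodule.mem_sup.mp
    ((map_mulRight_sup_rrSubmodule_eq hv hRR hD hdg h𝔭 hi hj hf hf0 hford).ge ha)
  refine ⟨t, ht, ?_⟩
  rwa [LinearMap.mulRight_apply, add_sub_cancel_left]

theorem hasPowDecomposition_of_mem_RRSpace {p : ℕ} (hv : IsValuationFamily Fq ord)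
    (hRR : RiemannRochHolds Fq ord dg g) (hdg : ∀ P, 0 < dg P) (hp : 0 < p) (S : Finset Pt)
    {D : Pt →₀ ℤ} (hD : ∀ P, 0 ≤ D P) (hDS : ↑D.support ⊆ (S : Set Pt))
    {a : K} (ha : a ∈ RRSpace ord D) :
    HasPowDecomposition p
      (RRSpace ord (∑ 𝔭 ∈ S, Finsupp.single 𝔭 (((p : ℤ) + 1) * (2 * g + 5))))
      {w | w = 0 ∨ ∀ P, P ∉ S → 0 ≤ ord P w} (RRSpace ord D) a := by
  set C : ℤ := ((p : ℤ) + 1) * (2 * g + 5)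
  have hC : 0 ≤ C := by positivity
  induction hn : (divisorDeg dg D).toNat using Nat.strong_induction_on generalizing D a with
  | _ n ih =>
  by_cases hsmall : ∀ P, D P ≤ C
  · have h1 : (1 : K) ∈ {w : K | w = 0 ∨ ∀ P, P ∉ S → 0 ≤ ord P w} :=
      Or.inr fun P _ => (hv.map_one P).ge
    simpa using HasPowDecomposition.zero.cons (RRSpace.mono (le_sum_single hDS hsmall) ha) h1
      (by rwa [one_pow, mul_one])
  simp only [not_forall, not_le] at hsmall
  obtain ⟨𝔭, h𝔭C⟩ := hsmall
  have h𝔭S : 𝔭 ∈ S := hDS (Finsupp.mem_support_iff.mpr (by omega))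
  obtain ⟨i, j, h𝔭, hi, hip, hj⟩ := exists_eq_add_mul_of_lt hp h𝔭C
  obtain ⟨f, hf, hf0, hford⟩ :=
    exists_mem_RRSpace_single_ord_eq_neg hv hRR (hdg 𝔭) (j := j) (by omega)
  obtain ⟨t, ht, hrest⟩ := exists_sub_mul_pow_mem_RRSpace_sub_single hv hRR hD (hdg 𝔭) h𝔭
    (by omega) (by omega) hf hf0 hford ha
  have htE : t ∈ RRSpace ord (∑ 𝔭 ∈ S, Finsupp.single 𝔭 C) :=
    RRSpace.mono (single_le_sum_single h𝔭S (by omega) (by nlinarith)) ht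
  have hfA : f = 0 ∨ ∀ P, P ∉ S → 0 ≤ ord P f := Or.inr fun P hP => by
    classical
    simpa [Finsupp.single_apply, show 𝔭 ≠ P by rintro rfl; exact hP h𝔭S] using
      (RRSpace.mem_iff_of_ne_zero hf0).mp hf P
  have hD' := sub_single_nonneg hD (n := 1) (by omega : 1 ≤ D 𝔭)
  have hdeg : (divisorDeg dg (D - Finsupp.single 𝔭 1)).toNat < n := by
    have h0 := divisorDeg_nonneg (dg := dg) hD'
    have h1 : (0 : ℤ) < dg 𝔭 := by exact_mod_cast hdg 𝔭
    rw [divisorDeg_sub, divisorDeg_single] at h0 ⊢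
    omega
  have hrest' := (ih _ hdeg hD' (support_sub_single_subset hDS h𝔭S 1) hrest rfl).mono
    (RRSpace.sub_single_subset 𝔭 zero_le_one)
  simpa using hrest'.cons htE hfA (mul_pow_mem_RRSpace hv hD h𝔭 ht hf)

end RiemannRoch

end Curve

theorem pth_power_decomposition_in_RRSpace_general (p : ℕ) [Fact p.Prime]
    (Fq K : Type*) [Field Fq] [Fintype Fq] [Field K] [Algebra Fq K]
    (Pt : Type*) (ord : Pt → K → ℤ) (dg : Pt → ℕ) (g : ℕ)
    (hord_mul : ∀ P (f h : K), f ≠ 0 → h ≠ 0 → ord P (f * h) = ord P f + ord P h)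
    (hord_add : ∀ P (f h : K), f ≠ 0 → h ≠ 0 → f + h ≠ 0 →
      min (ord P f) (ord P h) ≤ ord P (f + h))
    (hord_const : ∀ P (c : Fq), c ≠ 0 → ord P (algebraMap Fq K c) = 0)
    (hdg : ∀ P, 0 < dg P)
    (hRR : ∀ D : Pt →₀ ℤ, 2 * (g : ℤ) - 2 < divisorDeg dg D →
      (Nat.card (RRSpace ord D) : ℝ)
        = (Fintype.card Fq : ℝ) ^ (divisorDeg dg D + 1 - (g : ℤ)))
    (S : Finset Pt)
    (D : Pt →₀ ℤ) (hDeff : ∀ P, 0 ≤ D P) (hDsupp : ↑D.support ⊆ (S : Set Pt))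
    (a : K) (ha : a ∈ RRSpace ord D) :
    ∃ (m : ℕ) (t w : Fin m → K),
      (∀ i, t i ∈ RRSpace ord (∑ 𝔭 ∈ S, Finsupp.single 𝔭 (((p : ℤ) + 1) * (2 * g + 5)))) ∧
      (∀ i, w i = 0 ∨ ∀ P, P ∉ S → 0 ≤ ord P (w i)) ∧
      (∀ i, t i * (w i) ^ p ∈ RRSpace ord D) ∧
      a = ∑ i, t i * (w i) ^ p :=
  hasPowDecomposition_of_mem_RRSpace ⟨hord_mul, hord_add, hord_const⟩ hRR hdg
    (Fact.out : p.Prime).pos S hDeff hDsupp ha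

/-- Model of a smooth projective geometrically integral curve of genus `g` over `F_q` of
characteristic `p`: a function field `K/F_q` with closed points `Pt`, valuations `ord`,
residue degrees `dg`, satisfying Riemann–Roch.  Let `S` be a finite nonempty set of closed
points, let `A = {f : ord_P f ≥ 0 for all P ∉ S}` be the ring of functions regular off
`S`, and let `E = (p+1)(2g+5)·Σ_{𝔭∈S} 𝔭`.  Then every `a ∈ L(D)`, for `D` effective and
supported on `S`, can be written `a = t₁a₁^p + ⋯ + t_m a_m^p` with `tᵢ ∈ L(E)`, `aᵢ ∈ A`
and `tᵢaᵢ^p ∈ L(D)`. -/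
theorem pth_power_decomposition_in_RRSpace (p : ℕ) [Fact p.Prime]
    (Fq K : Type*) [Field Fq] [Fintype Fq] [Field K] [Algebra Fq K]
    [CharP K p]
    (Pt : Type*) (ord : Pt → K → ℤ) (dg : Pt → ℕ) (g : ℕ)
    (hord_mul : ∀ P (f h : K), f ≠ 0 → h ≠ 0 → ord P (f * h) = ord P f + ord P h)
    (hord_add : ∀ P (f h : K), f ≠ 0 → h ≠ 0 → f + h ≠ 0 →
      min (ord P f) (ord P h) ≤ ord P (f + h))
    (hord_const : ∀ P (c : Fq), c ≠ 0 → ord P (algebraMap Fq K c) = 0)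
    (hfin : ∀ f : K, f ≠ 0 → {P | ord P f ≠ 0}.Finite)
    (hdg : ∀ P, 0 < dg P)
    (hRR : ∀ D : Pt →₀ ℤ, 2 * (g : ℤ) - 2 < divisorDeg dg D →
      (Nat.card (RRSpace ord D) : ℝ)
        = (Fintype.card Fq : ℝ) ^ (divisorDeg dg D + 1 - (g : ℤ)))
    (S : Finset Pt) (hS : S.Nonempty)
    (D : Pt →₀ ℤ) (hDeff : ∀ P, 0 ≤ D P) (hDsupp : ↑D.support ⊆ (S : Set Pt))
    (a : K) (ha : a ∈ RRSpace ord D) :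
    ∃ (m : ℕ) (t w : Fin m → K),
      (∀ i, t i ∈ RRSpace ord (∑ 𝔭 ∈ S, Finsupp.single 𝔭 (((p : ℤ) + 1) * (2 * g + 5)))) ∧
      (∀ i, w i = 0 ∨ ∀ P, P ∉ S → 0 ≤ ord P (w i)) ∧
      (∀ i, t i * (w i) ^ p ∈ RRSpace ord D) ∧
      a = ∑ i, t i * (w i) ^ p :=
  pth_power_decomposition_in_RRSpace_general p Fq K Pt ord dg g hord_mul hord_add hord_const hdg hRR
    S D hDeff hDsupp a ha
end
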